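/- (Diminishing step size ZSharp convergence) Let L be β-smooth and bounded below by L_inf, with filtered stochastic gradients satisfying the variance bound σ_Ω²/b and mask norm contraction. If step sizes η_t ≤ 1/(4β), ascent radii with β²r_t² ≤ 1/4, ∑η_t = ∞, ∑η_t² < ∞, and ∑η_t r_t² < ∞, then ∑_{t=0}^∞ η_t E[‖∇L(w_t)‖²] < ∞, and hence liminf_{t→∞} E[‖∇L(w_t)‖²] = 0. -/
import Mathlib


open MeasureTheory

theorem stmt_13 {d : ℕ} {Ω : Type*} [MeasurableSpace Ω] (μ : Measure Ω)
    [IsProbabilityMeasure μ]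
    (β σΩ b Linf : ℝ) (hβ : 0 < β) (hb : 0 < b)
    (η r : ℕ → ℝ) (hηpos : ∀ t, 0 < η t)
    (hη : ∀ t, η t ≤ 1 / (4 * β)) (hβr : ∀ t, β ^ 2 * r t ^ 2 ≤ 1 / 4)
    (hdivη : ¬ Summable η) (hsumη2 : Summable (fun t => η t ^ 2))
    (hsumηr2 : Summable (fun t => η t * r t ^ 2))
    (L : EuclideanSpace ℝ (Fin d) → ℝ) (hdiff : Differentiable ℝ L)
    (hlip : ∀ u v : EuclideanSpace ℝ (Fin d),
      ‖gradient L u - gradient L v‖ ≤ β * ‖u - v‖)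
    (hbelow : ∀ x, Linf ≤ L x)
    (w : ℕ → Ω → EuclideanSpace ℝ (Fin d))
    -- per-step descent bound for the ZSharp updates with diminishing steps
    (hstep : ∀ t, (∫ ω, L (w (t + 1) ω) ∂μ) ≤
      (∫ ω, L (w t ω) ∂μ) - (η t / 4) * (∫ ω, ‖gradient L (w t ω)‖ ^ 2 ∂μ)
        + (2 * η t * β ^ 2 * r t ^ 2 / b) * σΩ ^ 2 + (η t ^ 2 * β / b) * σΩ ^ 2) :
    Summable (fun t => η t * (∫ ω, ‖gradient L (w t ω)‖ ^ 2 ∂μ)) ∧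
      Filter.liminf (fun t => ∫ ω, ‖gradient L (w t ω)‖ ^ 2 ∂μ) Filter.atTop = 0 := by
  set F : ℕ → ℝ := fun t => ∫ ω, ‖gradient L (w t ω)‖ ^ 2 ∂μ with hF
  set E : ℕ → ℝ := fun t => ∫ ω, L (w t ω) ∂μ with hE
  have hFnn : ∀ t, 0 ≤ F t := fun t =>
    integral_nonneg (fun ω => by positivity)
  -- lower bound on E
  have hElb : ∀ t, min Linf 0 ≤ E t := by
    intro t
    by_cases hint : Integrable (fun ω => L (w t ω)) μ
    · have : Linf ≤ E t := by
        have := integral_mono (integrable_const Linf) hint (fun ω => hbelow (w t ω))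
        simpa using this
      exact le_trans (min_le_left _ _) this
    · have : E t = 0 := integral_undef hint
      rw [this]
      exact min_le_right _ _
  set c : ℕ → ℝ := fun t =>
    (2 * η t * β ^ 2 * r t ^ 2 / b) * σΩ ^ 2 + (η t ^ 2 * β / b) * σΩ ^ 2 with hc
  have hcnn : ∀ t, 0 ≤ c t := by
    intro t
    have h1 : 0 ≤ η t := (hηpos t).le
    have : (0:ℝ) ≤ (2 * η t * β ^ 2 * r t ^ 2 / b) * σΩ ^ 2 := by positivity
    have : (0:ℝ) ≤ (η t ^ 2 * β / b) * σΩ ^ 2 := by positivity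
    positivity
  have hcsum : Summable c := by
    have h1 : Summable (fun t => (2 * β ^ 2 * σΩ ^ 2 / b) * (η t * r t ^ 2)) :=
      hsumηr2.mul_left _
    have h2 : Summable (fun t => (β * σΩ ^ 2 / b) * (η t ^ 2)) :=
      hsumη2.mul_left _
    exact (h1.add h2).congr (fun t => by simp [hc]; ring)
  have hcsum_le : ∀ n, ∑ t ∈ Finset.range n, c t ≤ ∑' t, c t := fun n =>
    Summable.sum_le_tsum (Finset.range n) (fun i _ => hcnn i) hcsum
  -- key telescoping inequality
  have hkey : ∀ n, E n + (1/4) * ∑ t ∈ Finset.range n, η t * F t ≤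
      E 0 + ∑ t ∈ Finset.range n, c t := by
    intro n
    induction n with
    | zero => simp
    | succ n ih =>
      have hs := hstep n
      rw [Finset.sum_range_succ, Finset.sum_range_succ]
      have : E (n + 1) ≤ E n - (η n / 4) * F n + c n := by
        simp only [hc]
        linarith [hs]
      linarith
  -- summability
  have hbound : ∀ n, ∑ t ∈ Finset.range n, η t * F t ≤
      4 * (E 0 + ∑' t, c t - min Linf 0) := by
    intro n
    have h1 := hkey n
    have h2 := hElb n
    have h3 := hcsum_le n
    linarith
  have hsum : Summable (fun t => η t * F t) :=
    summable_of_sum_range_le (fun t => mul_nonneg (hηpos t).le (hFnn t)) hbound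
  refine ⟨hsum, ?_⟩
  -- liminf
  have hkey2 : ∀ a : ℝ, (∀ᶠ t in Filter.atTop, a ≤ F t) → a ≤ 0 := by
    intro a ha
    by_contra hpos
    push_neg at hpos
    obtain ⟨N, hN⟩ := Filter.eventually_atTop.mp ha
    have hηs : Summable (fun t => η (t + N)) := by
      refine Summable.of_nonneg_of_le (fun t => (hηpos _).le) ?_
        (((summable_nat_add_iff N).mpr hsum).mul_left (1/a))
      intro t
      have hFa : a ≤ F (t + N) := hN _ (Nat.le_add_left _ _)
      have h2 : η (t + N) * a ≤ η (t + N) * F (t + N) :=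
        mul_le_mul_of_nonneg_left hFa (hηpos _).le
      rw [one_div]
      calc η (t + N) = a⁻¹ * (η (t + N) * a) := by field_simp
        _ ≤ a⁻¹ * (η (t + N) * F (t + N)) := by
            exact mul_le_mul_of_nonneg_left h2 (inv_nonneg.mpr hpos.le)
    exact hdivη ((summable_nat_add_iff N).mp hηs)
  rw [Filter.liminf_eq]
  apply le_antisymm
  · exact csSup_le ⟨0, Filter.Eventually.of_forall hFnn⟩ (fun a ha => hkey2 a ha)
  · exact le_csSup ⟨0, fun a ha => hkey2 a ha⟩ (Filter.Eventually.of_forall hFnn)
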